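/- Let (W,S) be a Coxeter system with exactly one bad 5-edge, and let D be a gross separator of S with head A = {a,b,c} and eyes {a,b}. Then the set of good foci of D equals the set of vertices of the connected components of Γ(W,S) − D that contain a neighbor of a and a neighbor of b but do not contain c. -/

import Mathlib

/-- A simple graph is *chordal* if every cycle of length at least four has a chord,
that is, an edge of the graph joining two vertices of the cycle that is not an
edge of the cycle. -/
def SimpleGraph.IsChordal {V : Type*} (G : SimpleGraph V) : Prop :=
  ∀ ⦃v : V⦄ (w : G.Walk v v), w.IsCycle → 4 ≤ w.length →
    ∃ a b, a ∈ w.support ∧ b ∈ w.support ∧ G.Adj a b ∧ s(a, b) ∉ w.edges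

/-- `B` is a `(c,f)`-separator of `G`: `c, f ∉ B` and `c` and `f` lie in different
connected components of the induced subgraph `G − B`. -/
def SimpleGraph.IsSeparator {V : Type*} (G : SimpleGraph V) (c f : V) (Bs : Set V) : Prop :=
  ∃ (hc : c ∈ Bsᶜ) (hf : f ∈ Bsᶜ), ¬ (G.induce Bsᶜ).Reachable ⟨c, hc⟩ ⟨f, hf⟩

/-- `B` is a minimal `(c,f)`-separator: no proper subset of `B` is a `(c,f)`-separator. -/
def SimpleGraph.IsMinSeparator {V : Type*} (G : SimpleGraph V) (c f : V) (Bs : Set V) : Prop :=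
  G.IsSeparator c f Bs ∧ ∀ Bs' ⊂ Bs, ¬ G.IsSeparator c f Bs'

/-- `u` and `g` lie in the same connected component of `G − B`. -/
def SimpleGraph.InSepComp {V : Type*} (G : SimpleGraph V) (Bs : Set V) (u g : V) : Prop :=
  ∃ (hu : u ∈ Bsᶜ) (hg : g ∈ Bsᶜ), (G.induce Bsᶜ).Reachable ⟨u, hu⟩ ⟨g, hg⟩

namespace CoxeterMatrix

variable {B : Type*}

/-- The underlying graph of the presentation diagram of a Coxeter matrix:
vertices are the indices, and `s, t` are adjacent when `m(s,t) < ∞`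
(`0` encodes `∞`). -/
def pDiagram (M : CoxeterMatrix B) : SimpleGraph B where
  Adj s t := s ≠ t ∧ M s t ≠ 0
  symm := by constructor; intro s t h; exact ⟨h.1.symm, by rw [M.symmetric]; exact h.2⟩
  loopless := by constructor; intro s h; exact h.1 rfl

/-- The underlying graph of the Coxeter diagram induced on a subset `A`:
`s, t ∈ A` are adjacent when `m(s,t) > 2` (including `m(s,t) = ∞`, encoded by `0`). -/
def cDiagramOn (M : CoxeterMatrix B) (A : Set B) : SimpleGraph A where
  Adj s t := (s : B) ≠ (t : B) ∧ M s t ≠ 2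
  symm := by constructor; intro s t h; exact ⟨h.1.symm, by rw [M.symmetric]; exact h.2⟩
  loopless := by constructor; intro s h; exact h.1 rfl

/-- A *simplex*: a subset whose elements pairwise satisfy `m(s,t) < ∞`. -/
def IsSimplex (M : CoxeterMatrix B) (A : Set B) : Prop :=
  A.Pairwise fun s t => M s t ≠ 0

/-- A subset is *irreducible* if its Coxeter diagram is connected. -/
def IsIrreducible (M : CoxeterMatrix B) (A : Set B) : Prop :=
  (M.cDiagramOn A).Connected

def IsIrredSimplex (M : CoxeterMatrix B) (A : Set B) : Prop :=
  M.IsSimplex A ∧ M.IsIrreducible A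

/-- A maximal irreducible simplex. -/
def IsMaxIrredSimplex (M : CoxeterMatrix B) (A : Set B) : Prop :=
  M.IsIrredSimplex A ∧ ∀ A' : Set B, A ⊂ A' → ¬ M.IsIrredSimplex A'

/-- `A^⊥ = {s : m(s,a) = 2 for all a ∈ A}`. -/
def perp (M : CoxeterMatrix B) (A : Set B) : Set B :=
  {s | ∀ a ∈ A, M s a = 2}

/-- Type `G₃` (= `H₃`): labels `3, 5` on a path, other label `2`. -/
def IsTypeG3 (M : CoxeterMatrix B) (A : Set B) : Prop :=
  ∃ a b c : B, A = {a, b, c} ∧ M a b = 3 ∧ M b c = 5 ∧ M a c = 2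

/-- Type `G₄` (= `H₄`): labels `3, 3, 5` on a path, other labels `2`. -/
def IsTypeG4 (M : CoxeterMatrix B) (A : Set B) : Prop :=
  ∃ a b c d : B, A = {a, b, c, d} ∧ M a b = 3 ∧ M b c = 3 ∧ M c d = 5 ∧
    M a c = 2 ∧ M a d = 2 ∧ M b d = 2

/-- A set of *bad edges*: a symmetric set of pairs `{a,b}` with `m(a,b) ≥ 5` such that
every irreducible simplex properly containing `{a,b}` is of type `G₃` or `G₄`. -/
def IsBadEdgeSet (M : CoxeterMatrix B) (E : B → B → Prop) : Prop :=
  (∀ a b, E a b → E b a) ∧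
  (∀ a b, E a b → M a b = 0 ∨ 5 ≤ M a b) ∧
  (∀ a b, E a b → ∀ A : Set B, M.IsIrredSimplex A → ({a, b} : Set B) ⊂ A →
    M.IsTypeG3 A ∨ M.IsTypeG4 A)

/-- A *bad* irreducible simplex: an irreducible simplex containing a bad edge. -/
def IsBadSimplex (M : CoxeterMatrix B) (E : B → B → Prop) (A : Set B) : Prop :=
  M.IsIrredSimplex A ∧ ∃ a ∈ A, ∃ b ∈ A, E a b

/-- A *bad separator*: a subset `Bs` containing a pair of eyes `a, b` with `m(a,b) = 2`,
with a bad focus `c ∉ Bs` making `{a,b,c}` a bad maximal irreducible simplex,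
`Bs ⊆ {a,b} ∪ {a,b,c}^⊥`, and with a good focus `f ∉ Bs` making `Bs` a minimal
`(c,f)`-separator of the presentation diagram. -/
def IsBadSeparator (M : CoxeterMatrix B) (E : B → B → Prop) (Bs : Set B) : Prop :=
  ∃ a b c : B, a ∈ Bs ∧ b ∈ Bs ∧ M a b = 2 ∧ c ∉ Bs ∧
    M.IsMaxIrredSimplex {a, b, c} ∧ M.IsBadSimplex E {a, b, c} ∧
    Bs ⊆ {a, b} ∪ M.perp {a, b, c} ∧
    ∃ f, f ∉ Bs ∧ M.pDiagram.IsMinSeparator c f Bs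

/-- `{x, y}` is a bad 5-edge: `m(x,y) = 5` and every irreducible simplex
properly containing `{x,y}` is of type `G₃` or `G₄`. -/
def IsBad5Edge (M : CoxeterMatrix B) (x y : B) : Prop :=
  x ≠ y ∧ M x y = 5 ∧ ∀ A : Set B, M.IsIrredSimplex A → ({x, y} : Set B) ⊂ A →
    M.IsTypeG3 A ∨ M.IsTypeG4 A

/-- The bad-edge set consisting of the single unordered pair `{x, y}`. -/
def singleEdge (x y : B) : B → B → Prop :=
  fun u v => (u = x ∧ v = y) ∨ (u = y ∧ v = x)

end CoxeterMatrix

/-! The head `{a, b, c}` is a simplex, so `c` is adjacent to both eyes. Putting an eye `a` back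
into `Γ − D` can then only join `c` to `f` through `a` itself, which happens exactly when the
component of `f` contains a neighbour of `a`. Being a good focus is thus a condition on the
component of `f` alone. -/

namespace SimpleGraph

variable {V : Type*} {G : SimpleGraph V} {D D' : Set V} {a c f p u v : V}

theorem InSepComp.symm (h : G.InSepComp D u v) : G.InSepComp D v u :=
  let ⟨hu, hv, r⟩ := h; ⟨hv, hu, r.symm⟩

theorem InSepComp.trans (huv : G.InSepComp D u v) (hvp : G.InSepComp D v p) :
    G.InSepComp D u p :=
  let ⟨hu, _, r⟩ := huv; let ⟨_, hp, r'⟩ := hvp; ⟨hu, hp, r.trans r'⟩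

theorem InSepComp.mono (hD : D' ⊆ D) (h : G.InSepComp D u v) : G.InSepComp D' u v :=
  let ⟨hu, hv, r⟩ := h
  ⟨fun h' => hu (hD h'), fun h' => hv (hD h'),
    r.map (induceHomOfLE (G := G) (Set.compl_subset_compl.mpr hD)).toHom⟩

theorem inSepComp_of_adj (hu : u ∉ D) (hv : v ∉ D) (h : G.Adj u v) : G.InSepComp D u v :=
  ⟨hu, hv, Adj.reachable (G := G.induce Dᶜ) (u := ⟨u, hu⟩) (v := ⟨v, hv⟩) h⟩

theorem isSeparator_iff_not_inSepComp (hc : c ∉ D) (hf : f ∉ D) :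
    G.IsSeparator c f D ↔ ¬ G.InSepComp D c f :=
  ⟨fun ⟨_, _, hn⟩ ⟨_, _, r⟩ => hn r, fun hn => ⟨hc, hf, fun r => hn ⟨hc, hf, r⟩⟩⟩

-- Read the walk backwards from `q`: it stays outside `D` up to `p`, unless it meets `a` first.
theorem inSepComp_or_exists_adj_of_walk {p q : ↥(D \ {a})ᶜ}
    (w : (G.induce (D \ {a})ᶜ).Walk p q) (hq : (q : V) ∉ D) :
    G.InSepComp D p q ∨ ∃ u, G.Adj a u ∧ G.InSepComp D u q := by
  induction w with
  | nil => exact Or.inl ⟨hq, hq, Reachable.refl _⟩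
  | @cons p p' q hadj _ ih =>
    rcases ih hq with hp'q | hexit
    · by_cases hp : (p : V) ∈ D
      · have hpa : (p : V) = a := by_contra fun hne => p.2 ⟨hp, hne⟩
        have hadj : G.Adj p p' := hadj
        rw [hpa] at hadj
        exact Or.inr ⟨p', hadj, hp'q⟩
      · exact Or.inl ((inSepComp_of_adj hp hp'q.1 hadj).trans hp'q)
    · exact Or.inr hexit

theorem not_isSeparator_diff_singleton_iff (hc : c ∉ D) (hf : f ∉ D)
    (hca : G.Adj c a) (hcf : ¬ G.InSepComp D c f) :
    ¬ G.IsSeparator c f (D \ {a}) ↔ ∃ u, G.Adj a u ∧ G.InSepComp D u f := by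
  have hD : D \ {a} ⊆ D := Set.sdiff_subset
  have hc' : c ∉ D \ {a} := fun h => hc (hD h)
  have hf' : f ∉ D \ {a} := fun h => hf (hD h)
  rw [isSeparator_iff_not_inSepComp hc' hf', not_not]
  constructor
  · rintro ⟨_, _, ⟨w⟩⟩
    exact (inSepComp_or_exists_adj_of_walk w hf).resolve_left hcf
  · rintro ⟨u, hau, huf⟩
    have ha' : a ∉ D \ {a} := fun h => h.2 rfl
    exact (inSepComp_of_adj hc' ha' hca).trans
      ((inSepComp_of_adj ha' (fun h => huf.1 (hD h)) hau).trans (huf.mono hD))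

end SimpleGraph

theorem CoxeterMatrix.pDiagram_adj_of_isSimplex {B : Type*} {M : CoxeterMatrix B} {A : Set B}
    (hA : M.IsSimplex A) {s t : B} (hs : s ∈ A) (ht : t ∈ A) (hst : s ≠ t) :
    M.pDiagram.Adj s t :=
  ⟨hst, hA hs ht hst⟩

theorem goodFoci_eq_components_general {B : Type*} (M : CoxeterMatrix B)
    (a b c : B)
    (hA : M.IsMaxIrredSimplex {a, b, c})
    (hc : c ∉ ({a, b} : Set B) ∪ M.perp {a, b, c}) :
    {f | f ∉ ({a, b} : Set B) ∪ M.perp {a, b, c} ∧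
        M.pDiagram.IsSeparator c f (({a, b} : Set B) ∪ M.perp {a, b, c}) ∧
        ¬ M.pDiagram.IsSeparator c f ((({a, b} : Set B) ∪ M.perp {a, b, c}) \ {a}) ∧
        ¬ M.pDiagram.IsSeparator c f ((({a, b} : Set B) ∪ M.perp {a, b, c}) \ {b})} =
      {g | g ∉ ({a, b} : Set B) ∪ M.perp {a, b, c} ∧
        (∃ u, M.pDiagram.Adj a u ∧
          M.pDiagram.InSepComp (({a, b} : Set B) ∪ M.perp {a, b, c}) u g) ∧
        (∃ v, M.pDiagram.Adj b v ∧
          M.pDiagram.InSepComp (({a, b} : Set B) ∪ M.perp {a, b, c}) v g) ∧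
        ¬ M.pDiagram.InSepComp (({a, b} : Set B) ∪ M.perp {a, b, c}) g c} := by
  set D := ({a, b} : Set B) ∪ M.perp {a, b, c}
  have hadj : ∀ e ∈ ({a, b} : Set B), M.pDiagram.Adj c e := fun e he =>
    CoxeterMatrix.pDiagram_adj_of_isSimplex hA.1.1 (by simp) (by aesop)
      (fun hce => hc (Or.inl (hce ▸ he)))
  ext g
  simp only [Set.mem_ofPred_eq]
  refine and_congr_right fun hg => ?_
  by_cases hcg : M.pDiagram.InSepComp D c g
  · simp [SimpleGraph.isSeparator_iff_not_inSepComp hc hg, hcg, hcg.symm]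
  · have hgc : ¬ M.pDiagram.InSepComp D g c := fun h => hcg h.symm
    rw [SimpleGraph.isSeparator_iff_not_inSepComp hc hg,
      SimpleGraph.not_isSeparator_diff_singleton_iff hc hg (hadj a (by simp)) hcg,
      SimpleGraph.not_isSeparator_diff_singleton_iff hc hg (hadj b (by simp)) hcg]
    simp only [hcg, hgc, not_false_eq_true, true_and, and_true]

/-- **Lemma 5.2.** Let `(W,S)` be a Coxeter system with exactly one bad 5-edge, and
let `D = {a,b} ∪ A^⊥` be a gross separator with head `A = {a,b,c}` and eyes `{a,b}`.
Then the set of good foci of `D` is the set of vertices of the connected components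
of `Γ(W,S) − D` that contain a neighbor of `a` and a neighbor of `b` but do not
contain `c`. -/
theorem goodFoci_eq_components {B : Type*} (M : CoxeterMatrix B)
    (x y : B) (hxy : M.IsBad5Edge x y) (a b c : B) (hab : M a b = 2)
    (hA : M.IsMaxIrredSimplex {a, b, c})
    (hbad : M.IsBadSimplex (CoxeterMatrix.singleEdge x y) {a, b, c})
    (hc : c ∉ ({a, b} : Set B) ∪ M.perp {a, b, c})
    (hgross : ∃ f, f ∉ ({a, b} : Set B) ∪ M.perp {a, b, c} ∧
      M.pDiagram.IsSeparator c f (({a, b} : Set B) ∪ M.perp {a, b, c}) ∧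
      ¬ M.pDiagram.IsSeparator c f ((({a, b} : Set B) ∪ M.perp {a, b, c}) \ {a}) ∧
      ¬ M.pDiagram.IsSeparator c f ((({a, b} : Set B) ∪ M.perp {a, b, c}) \ {b})) :
    {f | f ∉ ({a, b} : Set B) ∪ M.perp {a, b, c} ∧
        M.pDiagram.IsSeparator c f (({a, b} : Set B) ∪ M.perp {a, b, c}) ∧
        ¬ M.pDiagram.IsSeparator c f ((({a, b} : Set B) ∪ M.perp {a, b, c}) \ {a}) ∧
        ¬ M.pDiagram.IsSeparator c f ((({a, b} : Set B) ∪ M.perp {a, b, c}) \ {b})} =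
      {g | g ∉ ({a, b} : Set B) ∪ M.perp {a, b, c} ∧
        (∃ u, M.pDiagram.Adj a u ∧
          M.pDiagram.InSepComp (({a, b} : Set B) ∪ M.perp {a, b, c}) u g) ∧
        (∃ v, M.pDiagram.Adj b v ∧
          M.pDiagram.InSepComp (({a, b} : Set B) ∪ M.perp {a, b, c}) v g) ∧
        ¬ M.pDiagram.InSepComp (({a, b} : Set B) ∪ M.perp {a, b, c}) g c} :=
  goodFoci_eq_components_general M a b c hA hc
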